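/- Let X be a CAT(0) cube complex, let x ∈ ∂ₛX be a straight boundary point, and let v ∈ X be a vertex. If y, z ∈ ∂ₛX are straight boundary points with (y·z)_v < +∞, then at least one of the Gromov products (x·y)_v, (x·z)_v is finite. -/

import Mathlib

/-!
We use the standard combinatorial model of a CAT(0) cube complex: it is identified
with its vertex set endowed with the combinatorial (ℓ¹) metric, i.e. with a median
graph `G` on a vertex type `V`.  Halfspaces are realised as the vertex sets of the
two sides of the hyperplane dual to an edge, the Roller compactification `X̄` is the
set of ultrafilters of halfspaces, vertices embedding via principal ultrafilters,
and the Roller boundary `∂X` consists of the non-principal ultrafilters.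
-/

open scoped ENNReal
open Set

namespace CCCR

variable {V V' : Type*}

/-- The interval between two vertices w.r.t. the combinatorial metric. -/
def vInterval (G : SimpleGraph V) (u v : V) : Set V :=
  {w : V | G.dist u w + G.dist w v = G.dist u v}

/-- Combinatorial model of a CAT(0) cube complex (identified with its vertex set,
endowed with the combinatorial metric): a connected median graph. -/
def IsCCC (G : SimpleGraph V) : Prop :=
  G.Connected ∧ ∀ x y z : V, ∃! m : V,
    m ∈ vInterval G x y ∧ m ∈ vInterval G y z ∧ m ∈ vInterval G z x

/-- Halfspaces of the cube complex: the sides of the hyperplane dual to an edge. -/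
def IsHalfspace (G : SimpleGraph V) (h : Set V) : Prop :=
  ∃ u v : V, G.Adj u v ∧ h = {w : V | G.dist w v < G.dist w u}

/-- The halfspace dual to the (oriented) edge `(u,v)` containing `v`. -/
def edgeHalf (G : SimpleGraph V) (u v : V) : Set V :=
  {w : V | G.dist w v < G.dist w u}

/-- The hyperplane (wall) dual to the edge `(u,v)`, recorded as its pair of sides. -/
def wallOf (G : SimpleGraph V) (u v : V) : Set (Set V) :=
  {edgeHalf G u v, (edgeHalf G u v)ᶜ}

/-- Two (necessarily distinct) hyperplanes, with respective sides `h` and `k`,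
are transverse: all four quarter-spaces are nonempty. -/
def Transv (h k : Set V) : Prop :=
  (h ∩ k).Nonempty ∧ (h ∩ kᶜ).Nonempty ∧ (hᶜ ∩ k).Nonempty ∧ (hᶜ ∩ kᶜ).Nonempty

/-- An ultrafilter of halfspaces: a point of the Roller compactification X̄.
It contains exactly one side of each hyperplane, and any two members intersect. -/
def IsUltra (G : SimpleGraph V) (σ : Set (Set V)) : Prop :=
  (∀ h ∈ σ, IsHalfspace G h) ∧
  (∀ h : Set V, IsHalfspace G h → (h ∈ σ ↔ hᶜ ∉ σ)) ∧
  (∀ h ∈ σ, ∀ k ∈ σ, (h ∩ k).Nonempty)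

/-- The principal ultrafilter of a vertex, i.e. the image of `v` in X̄. -/
def princ (G : SimpleGraph V) (v : V) : Set (Set V) :=
  {h : Set V | IsHalfspace G h ∧ v ∈ h}

/-- A point of the Roller boundary ∂X = X̄ ∖ X: a non-principal ultrafilter. -/
def IsBdryPt (G : SimpleGraph V) (σ : Set (Set V)) : Prop :=
  IsUltra G σ ∧ ∀ v : V, σ ≠ princ G v

/-- The Roller boundary ∂X as a type. -/
abbrev Bdry (G : SimpleGraph V) : Type _ := {σ : Set (Set V) // IsBdryPt G σ}

/-- The Gromov product (x·y)_v = #𝒲(v | x, y) ∈ ℕ ∪ {+∞}, counted through the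
sides containing both x and y but not v. -/
noncomputable def grom (_G : SimpleGraph V) (v : V) (x y : Set (Set V)) : ℕ∞ :=
  {h : Set V | h ∈ x ∧ h ∈ y ∧ v ∉ h}.encard

/-- The embedding ℕ ∪ {+∞} → ℤ ∪ {±∞}. -/
noncomputable def toE (n : ℕ∞) : EReal := ((n : ℝ≥0∞) : EReal)

/-- The cross ratio cr_v(x,y,z,w) = (x·z)_v + (y·w)_v − (x·w)_v − (y·z)_v ∈ ℤ ∪ {±∞}. -/
noncomputable def crv (G : SimpleGraph V) (v : V) (x y z w : Set (Set V)) : EReal :=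
  toE (grom G v x z) + toE (grom G v y w) - toE (grom G v x w) - toE (grom G v y z)

/-- The triple of sums of Gromov products attached to a 4-tuple. -/
noncomputable def tripod (G : SimpleGraph V) (v : V) (x y z w : Set (Set V)) :
    ℕ∞ × ℕ∞ × ℕ∞ :=
  (grom G v x y + grom G v z w, grom G v x z + grom G v y w, grom G v x w + grom G v y z)

/-- (x,y,z,w) ∈ 𝒜 w.r.t. the basepoint v: at most one of the three sums is infinite. -/
def inA (G : SimpleGraph V) (v : V) (x y z w : Set (Set V)) : Prop :=
  ((tripod G v x y z w).1 ≠ ⊤ ∧ (tripod G v x y z w).2.1 ≠ ⊤) ∨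
  ((tripod G v x y z w).1 ≠ ⊤ ∧ (tripod G v x y z w).2.2 ≠ ⊤) ∨
  ((tripod G v x y z w).2.1 ≠ ⊤ ∧ (tripod G v x y z w).2.2 ≠ ⊤)

/-- (x,y,z,w) ∈ 𝒜 (this is independent of the basepoint). -/
def memA (G : SimpleGraph V) (x y z w : Set (Set V)) : Prop :=
  ∀ v : V, inA G v x y z w

/-- Two triples in (ℕ ∪ {+∞})³ are equivalent if they differ by adding a constant
n ∈ ℕ to all three entries. -/
def TripEquiv (p q : ℕ∞ × ℕ∞ × ℕ∞) : Prop :=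
  (∃ n : ℕ, p.1 = q.1 + (n : ℕ∞) ∧ p.2.1 = q.2.1 + (n : ℕ∞) ∧ p.2.2 = q.2.2 + (n : ℕ∞)) ∨
  (∃ n : ℕ, q.1 = p.1 + (n : ℕ∞) ∧ q.2.1 = p.2.1 + (n : ℕ∞) ∧ q.2.2 = p.2.2 + (n : ℕ∞))

/-- crt(x,y,z,w) = ⟪a:b:c⟫ (the cross ratio triple is independent of the basepoint,
so we require the equality of classes at every basepoint). -/
def crtEq (G : SimpleGraph V) (x y z w : Set (Set V)) (a b c : ℕ∞) : Prop :=
  ∀ v : V, TripEquiv (tripod G v x y z w) (a, b, c)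

/-- The median of three points of X̄. -/
def med (x y z : Set (Set V)) : Set (Set V) := (x ∩ y) ∪ (y ∩ z) ∪ (z ∩ x)

/-- The interval I(x,y) ⊆ X̄ between two points of X̄. -/
def rInterval (G : SimpleGraph V) (x y : Set (Set V)) : Set (Set (Set V)) :=
  {σ : Set (Set V) | IsUltra G σ ∧ x ∩ y ⊆ σ}

/-- `Op G x y z` : x and y are opposite with respect to z, i.e. the median
m = m(x,y,z) lies in X and I(x,y) = I(x,m) ∪ I(m,y). -/
def Op (G : SimpleGraph V) (x y z : Set (Set V)) : Prop :=
  (∃ p : V, med x y z = princ G p) ∧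
  rInterval G x y = rInterval G x (med x y z) ∪ rInterval G (med x y z) y

/-- A geodesic ray (based at `r 0`). -/
def IsGeodRay (G : SimpleGraph V) (r : ℕ → V) : Prop :=
  (∀ n : ℕ, G.Adj (r n) (r (n + 1))) ∧
  ∀ m n : ℕ, m ≤ n → G.dist (r m) (r n) = n - m

/-- A bi-infinite geodesic line. -/
def IsGeodLine (G : SimpleGraph V) (L : ℤ → V) : Prop :=
  (∀ n : ℤ, G.Adj (L n) (L (n + 1))) ∧
  ∀ m n : ℤ, m ≤ n → (G.dist (L m) (L n) : ℤ) = n - m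

/-- The set 𝒲(r) of hyperplanes crossed by (the edges of) a ray. -/
def rayWalls (G : SimpleGraph V) (r : ℕ → V) : Set (Set (Set V)) :=
  {W : Set (Set V) | ∃ n : ℕ, W = wallOf G (r n) (r (n + 1))}

/-- A hyperplane is adjacent to `v` if it is dual to an edge incident to `v`. -/
def WallAdjTo (G : SimpleGraph V) (v : V) (W : Set (Set V)) : Prop :=
  ∃ u : V, G.Adj v u ∧ W = wallOf G v u

/-- A straight ray: no two of the hyperplanes it crosses are transverse. -/
def RayStraight (G : SimpleGraph V) (r : ℕ → V) : Prop :=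
  ∀ m n : ℕ, ¬ Transv (edgeHalf G (r m) (r (m + 1))) (edgeHalf G (r n) (r (n + 1)))

/-- A straight line: no two of the hyperplanes it crosses are transverse. -/
def LineStraight (G : SimpleGraph V) (L : ℤ → V) : Prop :=
  ∀ m n : ℤ, ¬ Transv (edgeHalf G (L m) (L (m + 1))) (edgeHalf G (L n) (L (n + 1)))

/-- The endpoint at infinity r⁺ ∈ ∂X of a ray: the ultrafilter of those halfspaces
containing all but finitely many of its vertices. -/
def rayEnd (G : SimpleGraph V) (r : ℕ → V) : Set (Set V) :=
  {h : Set V | IsHalfspace G h ∧ ∃ N : ℕ, ∀ n : ℕ, N ≤ n → r n ∈ h}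

/-- A straight point of the Roller boundary: the endpoint at infinity of a straight ray. -/
def IsStraightPt (G : SimpleGraph V) (x : Set (Set V)) : Prop :=
  ∃ r : ℕ → V, IsGeodRay G r ∧ RayStraight G r ∧ rayEnd G r = x

/-- x and y are the two endpoints at infinity of the line L. -/
def LineEnds (G : SimpleGraph V) (L : ℤ → V) (x y : Set (Set V)) : Prop :=
  rayEnd G (fun n : ℕ => L (n : ℤ)) = x ∧ rayEnd G (fun n : ℕ => L (-(n : ℤ))) = y

/-- The edges from `v` to `a` and from `v` to `b` span a square. -/
def SpansSquare (G : SimpleGraph V) (v a b : V) : Prop :=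
  ∃ w : V, w ≠ v ∧ G.Adj a w ∧ G.Adj b w

/-- An extremal vertex: some edge at `v` spans a square with every other edge at `v`. -/
def Extremal (G : SimpleGraph V) (v : V) : Prop :=
  ∃ a : V, G.Adj v a ∧ ∀ b : V, G.Adj v b → b ≠ a → SpansSquare G v a b

/-- The cube complex has no extremal vertices. -/
def NoExtremal (G : SimpleGraph V) : Prop := ∀ v : V, ¬ Extremal G v

/-- A skinny vertex: exactly two incident edges. -/
def Skinny (G : SimpleGraph V) (v : V) : Prop := {u : V | G.Adj v u}.encard = 2

/-- A skinny ray: a geodesic ray whose initial vertex has at least three incident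
edges and all of whose other vertices are skinny. -/
def IsSkinnyRay (G : SimpleGraph V) (r : ℕ → V) : Prop :=
  IsGeodRay G r ∧ 3 ≤ {u : V | G.Adj (r 0) u}.encard ∧ ∀ n : ℕ, 1 ≤ n → Skinny G (r n)

/-- (The vertex set of) a cube of the complex: a subset inducing a hypercube graph. -/
def IsCube (G : SimpleGraph V) (c : Set V) : Prop :=
  ∃ (n : ℕ) (e : c ≃ (Fin n → Bool)),
    ∀ a b : c, G.Adj (a : V) (b : V) ↔ ∃! i : Fin n, e a i ≠ e b i

/-- A maximal cube. -/
def IsMaxCube (G : SimpleGraph V) (c : Set V) : Prop :=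
  IsCube G c ∧ ∀ c' : Set V, IsCube G c' → c ⊆ c' → c' = c

/-- Completeness: there is no infinite ascending chain of cubes. -/
def CubeComplete (G : SimpleGraph V) : Prop :=
  ¬ ∃ c : ℕ → Set V, (∀ n : ℕ, IsCube G (c n)) ∧ ∀ n : ℕ, c n ⊂ c (n + 1)

/-- No free faces: no non-maximal cube is contained in a unique maximal cube. -/
def NoFreeFaces (G : SimpleGraph V) : Prop :=
  ∀ c : Set V, IsCube G c → ¬ IsMaxCube G c → ¬ ∃! m : Set V, IsMaxCube G m ∧ c ⊆ m

/-- #𝒲(x, z | y, w): the number of hyperplanes separating x and z from y and w,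
counted through the sides containing x and z. -/
noncomputable def sepCount (x z y w : Set (Set V)) : ℕ∞ :=
  {h : Set V | h ∈ x ∧ h ∈ z ∧ h ∉ y ∧ h ∉ w}.encard

/-- A Möbius map between Roller boundaries: it maps 𝒜(X) into 𝒜(Y) and preserves
cross ratios. -/
def Mobius (G : SimpleGraph V) (G' : SimpleGraph V') (f : Bdry G → Bdry G') : Prop :=
  ∀ x y z w : Bdry G, memA G x.1 y.1 z.1 w.1 →
    memA G' (f x).1 (f y).1 (f z).1 (f w).1 ∧
    ∀ (v : V) (v' : V'),
      crv G' v' (f x).1 (f y).1 (f z).1 (f w).1 = crv G v x.1 y.1 z.1 w.1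

/-- The induced action of a cubical isomorphism on X̄: an ultrafilter is mapped to
the set of images of its halfspaces. -/
def mapUltra (φ : V → V') (σ : Set (Set V)) : Set (Set V') :=
  (fun h : Set V => φ '' h) '' σ

/-- The standard cubulation of ℝ: vertex set ℤ, edges between consecutive integers. -/
def zline : SimpleGraph ℤ := SimpleGraph.fromRel (fun m n => n = m + 1)

end CCCR

open CCCR

/-!
A straight ray `r` crosses a nested sequence of halfspaces `h₀ ⊇ h₁ ⊇ ⋯`, and since in a
median graph a halfspace is determined by any edge it separates (Djoković–Winkler), all
but finitely many halfspaces of `r⁺` that miss `v` are among the `hₙ`. Hence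
`(r⁺·y)_v = ∞` forces infinitely many `hₙ`, and then by nesting all of them, into the
ultrafilter `y`. If moreover `(r⁺·z)_v = ∞`, the `hₙ` with `n` large lie in `y` and in
`z` and miss `v`, so `(y·z)_v = ∞`.
-/

namespace CCCR

variable {V : Type*} {G : SimpleGraph V}

lemma mem_vInterval {u v w : V} :
    w ∈ vInterval G u v ↔ G.dist u w + G.dist w v = G.dist u v := Iff.rfl

lemma mem_edgeHalf {u v w : V} : w ∈ edgeHalf G u v ↔ G.dist w v < G.dist w u := Iff.rfl

lemma exists_adj_dist_eq_of_dist_eq_succ (hconn : G.Connected) {a u : V} {p : ℕ}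
    (hp : G.dist a u = p + 1) : ∃ c, G.Adj a c ∧ G.dist c u = p := by
  obtain ⟨W, hW⟩ := hconn.exists_walk_length_eq_dist a u
  cases W with
  | nil => simp at hp
  | @cons _ c _ hac q =>
    refine ⟨c, hac, le_antisymm ?_ ?_⟩
    · have := SimpleGraph.dist_le q
      simp only [SimpleGraph.Walk.length_cons] at hW
      omega
    · have := hconn.dist_triangle (u := a) (v := c) (w := u)
      rw [SimpleGraph.dist_eq_one_iff_adj.mpr hac] at this
      omega

namespace IsCCC

variable (hG : IsCCC G)
include hG

/-- The median of `u`, `v`, `w` is `u` or `v`. -/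
lemma dist_eq_succ_or_of_adj {u v : V} (huv : G.Adj u v) (w : V) :
    G.dist w u = G.dist w v + 1 ∨ G.dist w v = G.dist w u + 1 := by
  obtain ⟨m, ⟨hm₁, hm₂, hm₃⟩, -⟩ := hG.2 u v w
  simp only [mem_vInterval] at hm₁ hm₂ hm₃
  have huv₁ := SimpleGraph.dist_eq_one_iff_adj.mpr huv
  have := SimpleGraph.dist_comm (G := G) (u := u) (v := v)
  have := SimpleGraph.dist_comm (G := G) (u := w) (v := m)
  rcases Nat.add_eq_one_iff.mp (hm₁.trans huv₁) with ⟨hum, -⟩ | ⟨-, hmv⟩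
  · obtain rfl := hG.1.dist_eq_zero_iff.mp hum
    have := SimpleGraph.dist_comm (G := G) (u := w) (v := v)
    omega
  · obtain rfl := hG.1.dist_eq_zero_iff.mp hmv
    omega

lemma edgeHalf_subset_of_square {u v a b : V} (huv : G.Adj u v) (hab : G.Adj a b)
    (hua : G.Adj u a) (hvb : G.Adj v b) (hub : G.dist u b = 2) (hva : v ≠ a) :
    edgeHalf G u v ⊆ edgeHalf G a b := by
  intro w hw
  by_contra hw'
  rw [mem_edgeHalf] at hw hw'
  have hwu : G.dist w u = G.dist w v + 1 := by
    have := hG.dist_eq_succ_or_of_adj huv w; omega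
  have hwb : G.dist w b = G.dist w a + 1 := by
    have := hG.dist_eq_succ_or_of_adj hab w; omega
  have hwa : G.dist w a = G.dist w v := by
    have := hG.dist_eq_succ_or_of_adj hua w; have := hG.dist_eq_succ_or_of_adj hvb w; omega
  have one {x y : V} (h : G.Adj x y) : G.dist x y = 1 := SimpleGraph.dist_eq_one_iff_adj.mpr h
  have := one huv; have := one huv.symm; have := one hvb; have := one hvb.symm
  have := one hua; have := one hua.symm; have := one hab; have := one hab.symm
  have := SimpleGraph.dist_comm (G := G) (u := w) (v := v)
  have := SimpleGraph.dist_comm (G := G) (u := w) (v := a)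
  have := SimpleGraph.dist_comm (G := G) (u := w) (v := b)
  -- `v` and `a` would both be medians of `w`, `u`, `b`
  refine hva ((hG.2 w u b).unique (y₁ := v) (y₂ := a) ?_ ?_) <;>
    simp only [mem_vInterval] <;> refine ⟨?_, ?_, ?_⟩ <;> omega

lemma compl_edgeHalf {u v : V} (huv : G.Adj u v) : (edgeHalf G u v)ᶜ = edgeHalf G v u := by
  ext w
  simp only [mem_compl_iff, mem_edgeHalf, not_lt]
  have := hG.dist_eq_succ_or_of_adj huv w
  omega

lemma edgeHalf_eq_of_square {u v a b : V} (huv : G.Adj u v) (hab : G.Adj a b)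
    (hua : G.Adj u a) (hvb : G.Adj v b) (hub : G.dist u b = 2) (hva : G.dist v a = 2) :
    edgeHalf G u v = edgeHalf G a b := by
  refine (hG.edgeHalf_subset_of_square huv hab hua hvb hub ?_).antisymm
    (compl_subset_compl.mp ?_)
  · rintro rfl
    simp at hva
  · rw [hG.compl_edgeHalf huv, hG.compl_edgeHalf hab]
    refine hG.edgeHalf_subset_of_square huv.symm hab.symm hvb hua hva ?_
    rintro rfl
    simp at hub

lemma exists_square_of_dist_eq_succ {u v a b : V} {p : ℕ} (huv : G.Adj u v)
    (hab : G.Adj a b) (ha : a ∉ edgeHalf G u v) (hb : b ∈ edgeHalf G u v)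
    (hp : G.dist a u = p + 1) :
    ∃ c e, G.Adj c e ∧ c ∉ edgeHalf G u v ∧ e ∈ edgeHalf G u v ∧ G.dist c u = p ∧
      edgeHalf G c e = edgeHalf G a b := by
  obtain ⟨c, hac, hcu⟩ := exists_adj_dist_eq_of_dist_eq_succ hG.1 hp
  rw [mem_edgeHalf] at ha hb
  have tri (x y z : V) := hG.1.dist_triangle (u := x) (v := y) (w := z)
  have comm (x y : V) := SimpleGraph.dist_comm (G := G) (u := x) (v := y)
  have hab₁ := SimpleGraph.dist_eq_one_iff_adj.mpr hab
  have hac₁ := SimpleGraph.dist_eq_one_iff_adj.mpr hac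
  have hav : G.dist a v = p + 2 := by
    have := hG.dist_eq_succ_or_of_adj huv a; omega
  have hbuv : G.dist b u = p + 2 ∧ G.dist b v = p + 1 := by
    have := hG.dist_eq_succ_or_of_adj huv b; have := tri b a u; have := tri a b v
    have := comm a b; omega
  have hcv : G.dist c v = p + 1 := by
    have := hG.dist_eq_succ_or_of_adj huv c; have := tri a c v; omega
  have hcb : G.dist c b = 2 := by
    have := tri b a c; have := tri b c u; have := comm a b; have := comm b c; omega
  -- the median `e` of `b`, `c`, `v` is the fourth vertex of a square on `a`, `b`, `c`
  obtain ⟨e, ⟨he₁, he₂, he₃⟩, -⟩ := hG.2 b c v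
  simp only [mem_vInterval] at he₁ he₂ he₃
  have he : G.dist e b = 1 ∧ G.dist c e = 1 ∧ G.dist e v = p := by
    have := comm b e; have := comm c e; have := comm v e; have := comm v b; have := comm b c
    omega
  have heu : G.dist e u = p + 1 := by
    have := hG.dist_eq_succ_or_of_adj huv e; have := tri b e u; have := comm b e; omega
  have hea : G.dist e a = 2 := by
    have := tri e b a; have := tri a e v; have := comm e a; have := comm a b; omega
  have hce : G.Adj c e := SimpleGraph.dist_eq_one_iff_adj.mp he.2.1
  refine ⟨c, e, hce, ?_, ?_, hcu, ?_⟩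
  · rw [mem_edgeHalf]; omega
  · rw [mem_edgeHalf]; omega
  · exact hG.edgeHalf_eq_of_square hce hab hac.symm
      (SimpleGraph.dist_eq_one_iff_adj.mp he.1) hcb hea

/-- Djoković–Winkler, by moving the edge `ab` towards `uv` across squares. -/
lemma edgeHalf_eq_of_adj {u v a b : V} (huv : G.Adj u v) (hab : G.Adj a b)
    (ha : a ∉ edgeHalf G u v) (hb : b ∈ edgeHalf G u v) :
    edgeHalf G u v = edgeHalf G a b := by
  induction hp : G.dist a u using Nat.strong_induction_on generalizing a b with
  | _ p IH =>
  rcases p with _ | p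
  · obtain rfl := hG.1.dist_eq_zero_iff.mp hp
    rw [mem_edgeHalf, SimpleGraph.dist_comm (u := b) (v := a),
      SimpleGraph.dist_eq_one_iff_adj.mpr hab, Nat.lt_one_iff, hG.1.dist_eq_zero_iff] at hb
    rw [hb]
  · obtain ⟨c, e, hce, hc, he, hcu, hceab⟩ := hG.exists_square_of_dist_eq_succ huv hab ha hb hp
    rw [IH p (Nat.lt_succ_self p) hce hc he hcu, hceab]

lemma eq_edgeHalf_of_isHalfspace {h : Set V} (hh : IsHalfspace G h) {a b : V}
    (hab : G.Adj a b) (ha : a ∉ h) (hb : b ∈ h) : h = edgeHalf G a b := by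
  obtain ⟨u, v, huv, rfl⟩ := hh
  exact hG.edgeHalf_eq_of_adj huv hab ha hb

/-- Each such halfspace is the one dual to an edge of a fixed path from `v` to `w`. -/
lemma finite_setOf_isHalfspace_mem_not_mem (v w : V) :
    {h : Set V | IsHalfspace G h ∧ w ∈ h ∧ v ∉ h}.Finite := by
  obtain ⟨W⟩ := hG.1.preconnected v w
  refine (W.darts.finite_toSet.image fun d => edgeHalf G d.fst d.snd).subset ?_
  rintro h ⟨hh, hw, hv⟩
  obtain ⟨d, hd, hd₁, hd₂⟩ := W.exists_boundary_dart hᶜ hv (not_not.mpr hw)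
  exact ⟨d, hd, (hG.eq_edgeHalf_of_isHalfspace hh d.adj hd₁ (not_not.mp hd₂)).symm⟩

end IsCCC

lemma IsUltra.mem_of_subset {w : Set (Set V)} (hw : IsUltra G w) {h k : Set V} (hh : h ∈ w)
    (hk : IsHalfspace G k) (hhk : h ⊆ k) : k ∈ w := by
  by_contra hkw
  have hkc : kᶜ ∈ w := not_not.mp (mt (hw.2.1 k hk).mpr hkw)
  obtain ⟨t, hth, htk⟩ := hw.2.2 h hh kᶜ hkc
  exact htk (hhk hth)

def rayHalf (G : SimpleGraph V) (r : ℕ → V) (n : ℕ) : Set V := edgeHalf G (r n) (r (n + 1))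

lemma isHalfspace_rayHalf {r : ℕ → V} (hr : ∀ n, G.Adj (r n) (r (n + 1))) (n : ℕ) :
    IsHalfspace G (rayHalf G r n) :=
  ⟨r n, r (n + 1), hr n, rfl⟩

namespace IsGeodRay

variable {r : ℕ → V} (hr : IsGeodRay G r)
include hr

lemma mem_rayHalf_iff {m k : ℕ} : r k ∈ rayHalf G r m ↔ m < k := by
  rw [rayHalf, mem_edgeHalf]
  rcases le_or_gt k m with hkm | hmk
  · rw [hr.2 k m hkm, hr.2 k (m + 1) (by omega)]
    omega
  · rw [SimpleGraph.dist_comm, hr.2 (m + 1) k hmk, SimpleGraph.dist_comm, hr.2 m k hmk.le]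
    omega

lemma rayHalf_injective : Function.Injective (rayHalf G r) := by
  intro m n hmn
  have key (k : ℕ) : m < k ↔ n < k := by
    rw [← hr.mem_rayHalf_iff, hmn, hr.mem_rayHalf_iff]
  have := (key (m + 1)).mp (lt_add_one m)
  have := (key (n + 1)).mpr (lt_add_one n)
  omega

lemma rayHalf_antitone (hrs : RayStraight G r) : Antitone (rayHalf G r) := by
  intro m n hmn t ht
  by_contra htm
  rcases hmn.eq_or_lt with rfl | hlt
  · exact htm ht
  refine hrs m n (show Transv (rayHalf G r m) (rayHalf G r n) from
    ⟨⟨r (n + 1), ?_, ?_⟩, ⟨r (m + 1), ?_, ?_⟩, ⟨t, htm, ht⟩, ⟨r m, ?_, ?_⟩⟩) <;>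
    simp only [mem_compl_iff, hr.mem_rayHalf_iff] <;> omega

end IsGeodRay

namespace IsCCC

variable (hG : IsCCC G)
include hG

lemma exists_eq_rayHalf {r : ℕ → V} (hr : ∀ n, G.Adj (r n) (r (n + 1))) {h : Set V}
    (hh : IsHalfspace G h) (h₀ : r 0 ∉ h) {N : ℕ} (hN : r N ∈ h) :
    ∃ n, h = rayHalf G r n := by
  obtain ⟨n, hn, hn₁⟩ :=
    Nat.exists_not_and_succ_of_not_zero_of_exists (p := (r · ∈ h)) h₀ ⟨N, hN⟩
  exact ⟨n, hG.eq_edgeHalf_of_isHalfspace hh (hr n) hn hn₁⟩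

lemma infinite_setOf_rayHalf_mem_of_grom_eq_top {r : ℕ → V}
    (hr : ∀ n, G.Adj (r n) (r (n + 1))) {v : V} {w : Set (Set V)}
    (hvw : grom G v (rayEnd G r) w = ⊤) :
    {n | rayHalf G r n ∈ w ∧ v ∉ rayHalf G r n}.Infinite := by
  have hinf : {h | h ∈ rayEnd G r ∧ h ∈ w ∧ v ∉ h}.Infinite := encard_eq_top_iff.mp hvw
  refine Infinite.of_image (rayHalf G r)
    ((hinf.sdiff (hG.finite_setOf_isHalfspace_mem_not_mem v (r 0))).mono ?_)
  rintro h ⟨⟨⟨hh, N, hN⟩, hw, hv⟩, h₀⟩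
  obtain ⟨n, rfl⟩ := hG.exists_eq_rayHalf hr hh (fun h₀' => h₀ ⟨hh, h₀', hv⟩) (hN N le_rfl)
  exact ⟨n, ⟨hw, hv⟩, rfl⟩

lemma rayHalf_mem_of_grom_eq_top {r : ℕ → V} (hr : IsGeodRay G r) (hrs : RayStraight G r)
    {v : V} {w : Set (Set V)} (hw : IsUltra G w) (hvw : grom G v (rayEnd G r) w = ⊤)
    (n : ℕ) :
    rayHalf G r n ∈ w := by
  obtain ⟨k, ⟨hk, -⟩, hnk⟩ :=
    (hG.infinite_setOf_rayHalf_mem_of_grom_eq_top hr.1 hvw).exists_gt n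
  exact hw.mem_of_subset hk (isHalfspace_rayHalf hr.1 n) (hr.rayHalf_antitone hrs hnk.le)

end IsCCC
end CCCR

theorem stmt14_general {V : Type*} (G : SimpleGraph V) (hG : IsCCC G) (v : V)
    (x y z : Set (Set V))
    (hy : IsBdryPt G y) (hz : IsBdryPt G z)
    (hxs : IsStraightPt G x)
    (hyz : grom G v y z ≠ ⊤) :
    grom G v x y ≠ ⊤ ∨ grom G v x z ≠ ⊤ := by
  obtain ⟨r, hr, hrs, rfl⟩ := hxs
  by_contra! h
  obtain ⟨m, -, hvm⟩ := (hG.infinite_setOf_rayHalf_mem_of_grom_eq_top hr.1 h.1).nonempty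
  refine hyz (encard_eq_top_iff.mpr
    (((Ici_infinite m).image hr.rayHalf_injective.injOn).mono ?_))
  rintro _ ⟨n, hn, rfl⟩
  exact ⟨hG.rayHalf_mem_of_grom_eq_top hr hrs hy.1 h.1 n,
    hG.rayHalf_mem_of_grom_eq_top hr hrs hz.1 h.2 n,
    fun hv => hvm (hr.rayHalf_antitone hrs hn hv)⟩

/-- Lemma `Gromov products of straight points`: for straight
boundary points `x, y, z` and a vertex `v`, if `(y·z)_v < +∞` then at least one of
`(x·y)_v`, `(x·z)_v` is finite. -/
theorem stmt14 {V : Type*} (G : SimpleGraph V) (hG : IsCCC G) (v : V)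
    (x y z : Set (Set V))
    (hx : IsBdryPt G x) (hy : IsBdryPt G y) (hz : IsBdryPt G z)
    (hxs : IsStraightPt G x) (hys : IsStraightPt G y) (hzs : IsStraightPt G z)
    (hyz : grom G v y z ≠ ⊤) :
    grom G v x y ≠ ⊤ ∨ grom G v x z ≠ ⊤ :=
  stmt14_general G hG v x y z hy hz hxs hyz
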